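/- arXiv:2003.13308 — 2 statements merged into one kernel-verified Lean document; each statement's English description precedes it below -/
import Mathlib

section
/- Let P, Q be Laurent polynomials on (ℂ*)^n that are quasi-homogeneous with respect to a weight u ∈ ℤ^n with degrees d_P ≠ d_Q, and suppose additionally that the gradient of P does not vanish on P^{-1}(0) \ Q^{-1}(0) in (ℂ*)^n. Then g = P/Q has no critical points on (ℂ*)^n \ Q^{-1}(0); in particular g(Sing g) = ∅. -/
/-!
Along the curve `s ↦ s^u · z` a quasi-homogeneous function of degree `d` scales by `s^d`, so
differentiating at `s = 1` gives the Euler identity `Dg(z)(u · z) = d · g(z)`. The ratio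
`g = P/Q` is quasi-homogeneous of degree `d_P - d_Q ≠ 0`, hence `Dg(z) ≠ 0` wherever
`g(z) ≠ 0`; where `P(z) = 0` the quotient rule reduces `Dg(z)` to `DP(z) / Q(z) ≠ 0`.
-/

/-- Evaluation of the Laurent polynomial with (finitely supported) coefficient
function `A : (Fin n → ℤ) →₀ ℂ` at a point `z` of the torus `(ℂ*)ⁿ`. -/
noncomputable def levalL {n : ℕ} (A : (Fin n → ℤ) →₀ ℂ) (z : Fin n → ℂ) : ℂ :=
  ∑ α ∈ A.support, A α * ∏ i, z i ^ α i

open Finset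

theorem prod_zpow_eq_zpow_sum₀ {ι G₀ : Type*} [CommGroupWithZero G₀] {a : G₀} (ha : a ≠ 0)
    (s : Finset ι) (f : ι → ℤ) : ∏ i ∈ s, a ^ f i = a ^ ∑ i ∈ s, f i := by
  induction s using cons_induction with
  | empty => simp
  | cons j s _ ih => rw [prod_cons, sum_cons, ih, zpow_add₀ ha]

theorem exists_apply_single_ne_zero {R ι M F : Type*} [Semiring R] [Fintype ι] [DecidableEq ι]
    [AddCommMonoid M] [Module R M] [FunLike F (ι → R) M] [LinearMapClass F R (ι → R) M]
    (L : F) {v : ι → R} (hv : L v ≠ 0) :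
    ∃ j, L (Pi.single j 1) ≠ 0 := by
  contrapose! hv
  rw [← univ_sum_single v, map_sum]
  refine sum_eq_zero fun j _ => ?_
  rw [← mul_one (v j), ← smul_eq_mul, Pi.single_smul', map_smul, hv, smul_zero]

theorem fderiv_fun_div_apply {𝕜 E : Type*} [NontriviallyNormedField 𝕜] [NormedAddCommGroup E]
    [NormedSpace 𝕜 E] {f g : E → 𝕜} {x : E} (hf : DifferentiableAt 𝕜 f x)
    (hg : DifferentiableAt 𝕜 g x) (hgx : g x ≠ 0) (v : E) :
    fderiv 𝕜 (fun y => f y / g y) x v =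
      (fderiv 𝕜 f x v * g x - f x * fderiv 𝕜 g x v) / g x ^ 2 := by
  have hinv := (hasDerivAt_inv hgx).comp_hasFDerivAt x hg.hasFDerivAt
  have hdiv : HasFDerivAt (fun y => f y / g y)
      (f x • (-(g x ^ 2)⁻¹) • fderiv 𝕜 g x + (g x)⁻¹ • fderiv 𝕜 f x) x := by
    simpa [div_eq_mul_inv] using hf.hasFDerivAt.fun_mul hinv
  rw [hdiv.fderiv]
  simp only [add_apply, smul_apply, smul_eq_mul]
  field_simp
  ring

section QuasiHomogeneous

variable {𝕜 ι : Type*} [NontriviallyNormedField 𝕜]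

def IsQuasiHomogeneous (u : ι → ℤ) (d : ℤ) (f : (ι → 𝕜) → 𝕜) : Prop :=
  ∀ s : 𝕜, s ≠ 0 → ∀ z, f (fun i => s ^ u i * z i) = s ^ d * f z

theorem IsQuasiHomogeneous.div {u : ι → ℤ} {d e : ℤ} {f g : (ι → 𝕜) → 𝕜}
    (hf : IsQuasiHomogeneous u d f) (hg : IsQuasiHomogeneous u e g) :
    IsQuasiHomogeneous u (d - e) fun z => f z / g z := by
  intro s hs z
  simp only [hf s hs, hg s hs, zpow_sub₀ hs]
  field_simp

theorem IsQuasiHomogeneous.fderiv_apply_euler [Fintype ι] {u : ι → ℤ} {d : ℤ}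
    {f : (ι → 𝕜) → 𝕜} {z : ι → 𝕜} (hf : IsQuasiHomogeneous u d f)
    (hdiff : DifferentiableAt 𝕜 f z) :
    fderiv 𝕜 f z (fun i => u i * z i) = d * f z := by
  have hcurve : HasDerivAt (fun s : 𝕜 => fun i => s ^ u i * z i) (fun i => u i * z i) 1 := by
    refine hasDerivAt_pi.2 fun i => ?_
    simpa using (hasDerivAt_zpow (u i) (1 : 𝕜) (Or.inl one_ne_zero)).mul_const (z i)
  have hcomp := hdiff.hasFDerivAt.comp_hasDerivAt_of_eq (1 : 𝕜) hcurve (by simp)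
  have hpow : HasDerivAt (fun s : 𝕜 => s ^ d * f z) (d * f z) 1 := by
    simpa using (hasDerivAt_zpow d (1 : 𝕜) (Or.inl one_ne_zero)).mul_const (f z)
  refine hcomp.unique (hpow.congr_of_eventuallyEq ?_)
  filter_upwards [eventually_ne_nhds one_ne_zero] with s hs
  exact hf s hs z

end QuasiHomogeneous

section LaurentPolynomial

variable {n : ℕ}

theorem differentiableAt_levalL (A : (Fin n → ℤ) →₀ ℂ) {z : Fin n → ℂ} (hz : ∀ i, z i ≠ 0) :
    DifferentiableAt ℂ (levalL A) z := by
  unfold levalL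
  fun_prop (disch := simp [hz])

theorem isQuasiHomogeneous_levalL {A : (Fin n → ℤ) →₀ ℂ} {u : Fin n → ℤ} {d : ℤ}
    (hA : ∀ α ∈ A.support, ∑ i, u i * α i = d) : IsQuasiHomogeneous u d (levalL A) := by
  intro s hs z
  simp only [levalL, mul_sum]
  refine sum_congr rfl fun α hα => ?_
  simp only [mul_zpow, ← zpow_mul, prod_mul_distrib, prod_zpow_eq_zpow_sum₀ hs, hA α hα]
  ring

end LaurentPolynomial

/-- If `P`, `Q` are quasi-homogeneous Laurent polynomials on the torus with
degrees `d_P ≠ d_Q` with respect to a weight `u`, and the gradient of `P` does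
not vanish on `P⁻¹(0) \ Q⁻¹(0)`, then `g = P/Q` has no critical points on
`(ℂ*)ⁿ \ Q⁻¹(0)`; in particular `g(Sing g) = ∅`. -/
theorem no_critical_points_quasi_homogeneous_ratio {n : ℕ} (u : Fin n → ℤ)
    (dP dQ : ℤ) (hne : dP ≠ dQ) (A B : (Fin n → ℤ) →₀ ℂ)
    (hA : ∀ α ∈ A.support, ∑ i, u i * α i = dP)
    (hB : ∀ α ∈ B.support, ∑ i, u i * α i = dQ)
    (hgrad : ∀ z : Fin n → ℂ, (∀ i, z i ≠ 0) → levalL A z = 0 → levalL B z ≠ 0 →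
      ∃ j, fderiv ℂ (levalL A) z (Pi.single j 1) ≠ 0) :
    ∀ z : Fin n → ℂ, (∀ i, z i ≠ 0) → levalL B z ≠ 0 →
      ∃ j, fderiv ℂ (fun w => levalL A w / levalL B w) z (Pi.single j 1) ≠ 0 := by
  intro z hz hQ
  have hPdiff := differentiableAt_levalL A hz
  have hQdiff := differentiableAt_levalL B hz
  by_cases hP : levalL A z = 0
  · obtain ⟨j, hj⟩ := hgrad z hz hP hQ
    refine ⟨j, ?_⟩
    rw [fderiv_fun_div_apply hPdiff hQdiff hQ, hP]
    simpa using ⟨hj, hQ⟩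
  · have hg := (isQuasiHomogeneous_levalL hA).div (isQuasiHomogeneous_levalL hB)
    refine exists_apply_single_ne_zero _ (v := fun i => u i * z i) ?_
    rw [hg.fderiv_apply_euler (by fun_prop (disch := exact hQ))]
    exact mul_ne_zero (Int.cast_ne_zero.2 (sub_ne_zero.2 hne)) (div_ne_zero hP hQ)
end

section
/- Suppose f = P/Q is a rational function on ℂ^n, h : (0,1) → ℂ^n \ Q^{-1}(0) is a curve of the form h(t) = a t^α + …, a ≠ 0, α < 0, λ : (0,1) → ℂ is analytic with grad f(h(t)) = λ(t) h(t) for all t, and f(h(t)) ≡ 0. Then λ(t) ≡ 0, and consequently grad f(h(t)) ≡ 0 along the curve. -/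
/-!
Differentiating `f ∘ h ≡ 0` and inserting `grad f (h t) = λ t • h t` gives
`conj (λ t) * ⟨h' t, h t⟩ = 0`. The Hermitian product expands as
`α ‖a‖² t^(2α-1) + o(t^(2α-1))`, so it is nonzero near `0⁺`; hence `λ` vanishes on some
`(0, δ)`, and by analyticity on all of `(0, 1)`.
-/

open Asymptotics Filter Set Topology Matrix ComplexOrder

theorem LinearMap.apply_eq_star_mul_dotProduct_star {ι R : Type*} [Fintype ι] [DecidableEq ι]
    [CommSemiring R] [StarRing R] (L : (ι → R) →ₗ[R] R) {c : R} {w : ι → R}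
    (hL : ∀ i, star (L (Pi.single i 1)) = c * w i) (v : ι → R) :
    L v = star c * (v ⬝ᵥ star w) := by
  have hLi : ∀ i, L (Pi.single i 1) = star c * star (w i) := fun i => by
    rw [← star_star (L _), hL, star_mul', mul_comm]
  conv_lhs => rw [← Finset.univ_sum_single v]
  simp only [map_sum, dotProduct, Finset.mul_sum, Pi.star_apply]
  refine Finset.sum_congr rfl fun i _ => ?_
  have hsingle : Pi.single i (v i) = v i • Pi.single i (1 : R) := by
    rw [← Pi.single_smul', smul_eq_mul, mul_one]
  rw [hsingle, map_smul, hLi, smul_eq_mul]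
  ring

theorem fderiv_apply_eq_zero_of_comp_eventuallyEq_zero {E F : Type*} [NormedAddCommGroup E]
    [NormedSpace ℂ E] [NormedAddCommGroup F] [NormedSpace ℂ F] {f : E → F} {γ : ℝ → E}
    {γ' : E} {t : ℝ} (hf : DifferentiableAt ℂ f (γ t)) (hγ : HasDerivAt γ γ' t)
    (h0 : f ∘ γ =ᶠ[𝓝 t] 0) : fderiv ℂ f (γ t) γ' = 0 :=
  ((hf.hasFDerivAt.restrictScalars ℝ).comp_hasDerivAt t hγ).unique
    ((hasDerivAt_const t 0).congr_of_eventuallyEq h0)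

section Asymptotics

variable {X ι : Type*} {l : Filter X} {φ ψ : X → ℝ}

theorem isLittleO_mul_star_sub_mul (p q : ℂ) {ε δ : X → ℂ} (hε : ε =o[l] φ) (hδ : δ =o[l] ψ) :
    (fun x => (ψ x * q + δ x) * star (φ x * p + ε x) - (ψ x * φ x : ℂ) * (q * star p))
      =o[l] fun x => ψ x * φ x := by
  have hε' : (fun x => star (ε x)) =o[l] φ :=
    IsLittleO.of_norm_left (by simpa only [norm_star] using hε.norm_left)
  have hψ : (fun x => q * ψ x) =O[l] ψ :=
    (Complex.isBigO_ofReal_left.2 (isBigO_refl ψ l)).const_mul_left q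
  have hφ : (fun x => star p * φ x) =O[l] φ :=
    (Complex.isBigO_ofReal_left.2 (isBigO_refl φ l)).const_mul_left (star p)
  refine (((hψ.mul_isLittleO hε').add (hδ.mul_isBigO hφ)).add
    (hδ.mul_isBigO hε'.isBigO)).congr_left fun x => ?_
  simp only [star_add, star_mul', Complex.star_def, Complex.conj_ofReal]
  ring

theorem isLittleO_dotProduct_star_sub [Fintype ι] (a b : ι → ℂ) {e e' : X → ι → ℂ}
    (he : ∀ i, (fun x => e x i) =o[l] φ) (he' : ∀ i, (fun x => e' x i) =o[l] ψ) :
    (fun x => ((ψ x : ℂ) • b + e' x) ⬝ᵥ star ((φ x : ℂ) • a + e x)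
        - (ψ x * φ x : ℂ) * (b ⬝ᵥ star a)) =o[l] fun x => ψ x * φ x := by
  simp only [dotProduct, Finset.mul_sum, ← Finset.sum_sub_distrib, Pi.add_apply, Pi.smul_apply,
    Pi.star_apply, smul_eq_mul]
  exact IsLittleO.fun_sum fun i _ => isLittleO_mul_star_sub_mul (a i) (b i) (he i) (he' i)

theorem eventually_dotProduct_star_ne_zero [Fintype ι] (a b : ι → ℂ) {e e' : X → ι → ℂ}
    (he : ∀ i, (fun x => e x i) =o[l] φ) (he' : ∀ i, (fun x => e' x i) =o[l] ψ)
    (hba : b ⬝ᵥ star a ≠ 0) (hφψ : ∀ᶠ x in l, ψ x * φ x ≠ 0) :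
    ∀ᶠ x in l, ((ψ x : ℂ) • b + e' x) ⬝ᵥ star ((φ x : ℂ) • a + e x) ≠ 0 := by
  have hmain : (fun x => (ψ x * φ x : ℂ) * (b ⬝ᵥ star a)) =Θ[l] fun x => ψ x * φ x := by
    simp_rw [mul_comm _ (b ⬝ᵥ star a)]
    refine (isTheta_const_mul_left hba).2 ?_
    simpa only [Complex.ofReal_mul] using Complex.isTheta_ofReal (fun x => ψ x * φ x) l
  filter_upwards [(hmain.add_isLittleO (isLittleO_dotProduct_star_sub a b he he')).eq_zero_iff,
    hφψ] with x hiff hx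
  simpa only [Pi.add_apply, add_sub_cancel, hx, iff_false] using hiff

end Asymptotics

theorem AnalyticOnNhd.eqOn_zero_Ioo_of_eventually_nhdsGT {E : Type*} [NormedAddCommGroup E]
    [NormedSpace ℝ E] {f : ℝ → E} {a b : ℝ} (hf : AnalyticOnNhd ℝ f (Ioo a b))
    (h0 : ∀ᶠ x in 𝓝[>] a, f x = 0) : EqOn f 0 (Ioo a b) := by
  intro x hx
  obtain ⟨u, hu, hzero⟩ := mem_nhdsGT_iff_exists_Ioo_subset.mp h0
  have hm : (a + min u x) / 2 ∈ Ioo a (min u x) := by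
    constructor <;> linarith [lt_min (mem_Ioi.mp hu) hx.1]
  refine hf.eqOn_zero_of_preconnected_of_eventuallyEq_zero isPreconnected_Ioo
    ⟨hm.1, hm.2.trans_le (min_le_right _ _) |>.trans hx.2⟩ ?_ hx
  filter_upwards [isOpen_Ioo.mem_nhds hm] with y hy
  exact hzero ⟨hy.1, hy.2.trans_le (min_le_left _ _)⟩

/-- If `f = P/Q` is a rational function on `ℂⁿ`, `h : (0,1) → ℂⁿ \ Q⁻¹(0)` is a
curve of the form `h(t) = a t^α + …` with `a ≠ 0`, `α < 0`, `λ` is analytic with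
`grad f(h(t)) = λ(t) h(t)`, and `f(h(t)) ≡ 0`, then `λ ≡ 0` and consequently
`grad f(h(t)) ≡ 0` along the curve. -/
theorem lambda_vanishes_on_zero_fiber_curve (n : ℕ)
    (P Q : MvPolynomial (Fin n) ℂ) (h h' e e' : ℝ → Fin n → ℂ) (lam : ℝ → ℂ)
    (a : Fin n → ℂ) (ha : a ≠ 0) (α : ℝ) (hα : α < 0)
    (hQ : ∀ t ∈ Set.Ioo (0 : ℝ) 1, MvPolynomial.eval (h t) Q ≠ 0)
    (hderiv : ∀ t ∈ Set.Ioo (0 : ℝ) 1, HasDerivAt h (h' t) t)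
    (hh : ∀ t ∈ Set.Ioo (0 : ℝ) 1, ∀ i, h t i = ((t ^ α : ℝ) : ℂ) * a i + e t i)
    (hh' : ∀ t ∈ Set.Ioo (0 : ℝ) 1, ∀ i,
      h' t i = ((α * t ^ (α - 1) : ℝ) : ℂ) * a i + e' t i)
    (he : ∀ i, (fun t : ℝ => e t i) =o[nhdsWithin 0 (Set.Ioi 0)] fun t : ℝ => t ^ α)
    (he' : ∀ i, (fun t : ℝ => e' t i) =o[nhdsWithin 0 (Set.Ioi 0)]
      fun t : ℝ => t ^ (α - 1))
    (hlam : ∀ t ∈ Set.Ioo (0 : ℝ) 1, AnalyticAt ℝ lam t)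
    (hgrad : ∀ t ∈ Set.Ioo (0 : ℝ) 1, ∀ i,
      (starRingEnd ℂ)
          (fderiv ℂ (fun z => MvPolynomial.eval z P / MvPolynomial.eval z Q) (h t)
            (Pi.single i 1))
        = lam t * h t i)
    (hf0 : ∀ t ∈ Set.Ioo (0 : ℝ) 1,
      MvPolynomial.eval (h t) P / MvPolynomial.eval (h t) Q = 0) :
    ∀ t ∈ Set.Ioo (0 : ℝ) 1, lam t = 0 ∧ ∀ i,
      (starRingEnd ℂ)
          (fderiv ℂ (fun z => MvPolynomial.eval z P / MvPolynomial.eval z Q) (h t)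
            (Pi.single i 1)) = 0 := by
  set F : (Fin n → ℂ) → ℂ := fun z => MvPolynomial.eval z P / MvPolynomial.eval z Q
  have hkey : ∀ t ∈ Ioo (0 : ℝ) 1, star (lam t) * (h' t ⬝ᵥ star (h t)) = 0 := fun t ht => by
    have hF : DifferentiableAt ℂ F (h t) :=
      ((AnalyticOnNhd.eval_mvPolynomial P _ trivial).div
        (AnalyticOnNhd.eval_mvPolynomial Q _ trivial) (hQ t ht)).differentiableAt
    rw [← (fderiv ℂ F (h t) : (Fin n → ℂ) →ₗ[ℂ] ℂ).apply_eq_star_mul_dotProduct_star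
      (hgrad t ht)]
    exact fderiv_apply_eq_zero_of_comp_eventuallyEq_zero hF (hderiv t ht)
      (eventually_of_mem (isOpen_Ioo.mem_nhds ht) (hf0 · ·))
  have hne : ∀ᶠ t in 𝓝[>] 0, h' t ⬝ᵥ star (h t) ≠ 0 := by
    have hba : ((α : ℂ) • a) ⬝ᵥ star a ≠ 0 := by
      simpa only [smul_dotProduct, smul_eq_mul, ne_eq, mul_eq_zero, Complex.ofReal_eq_zero,
        hα.ne, dotProduct_self_star_eq_zero, false_or] using ha
    have hpos : ∀ᶠ t in 𝓝[>] (0 : ℝ), t ^ (α - 1) * t ^ α ≠ 0 :=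
      eventually_nhdsWithin_of_forall fun t (ht : 0 < t) => by positivity
    filter_upwards [eventually_dotProduct_star_ne_zero a _ he he' hba hpos,
      Ioo_mem_nhdsGT one_pos] with t hdot ht
    convert hdot using 3 <;> funext i
    · rw [hh' t ht i, Pi.add_apply, Pi.smul_apply, Pi.smul_apply, smul_eq_mul, smul_eq_mul,
        Complex.ofReal_mul]
      ring
    · rw [hh t ht i, Pi.add_apply, Pi.smul_apply, smul_eq_mul]
  have hlam0 : EqOn lam 0 (Ioo 0 1) := AnalyticOnNhd.eqOn_zero_Ioo_of_eventually_nhdsGT hlam <| by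
    filter_upwards [hne, Ioo_mem_nhdsGT one_pos] with t hdot ht
    simpa only [mul_eq_zero, star_eq_zero, hdot, or_false] using hkey t ht
  intro t ht
  exact ⟨hlam0 ht, fun i => by rw [hgrad t ht i, hlam0 ht, Pi.zero_apply, zero_mul]⟩
end
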